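/- arXiv:2007.06633 — 3 statements merged into one kernel-verified Lean document; each statement's English description precedes it below -/
import Mathlib

section
/- Let N ∈ ℕ, let a ≤ b and c ≤ d be real numbers, let f : [a,b] → ℝ^N be continuous, and let φ : [c,d] → [a,b] be continuously differentiable, strictly increasing, with φ(c) = a and φ(d) = b. Then for every multi-index I = (i_1,…,i_m), ∫_{c ≤ t_1 ≤ ⋯ ≤ t_m ≤ d} ∏_{j=1}^m f_{i_j}(φ(t_j)) φ'(t_j) dt_1⋯dt_m = ∫_{a ≤ s_1 ≤ ⋯ ≤ s_m ≤ b} ∏_{j=1}^m f_{i_j}(s_j) ds_1⋯ds_m. (Reparametrization invariance of the path signature: S(γ∘φ) = S(γ), expressed in terms of the derivative f = γ'.) -/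
/-!
The coordinatewise map `t ↦ (φ (t j))_j` sends the simplex in `[c,d]` bijectively onto the
simplex in `[a,b]`, and its Jacobian is diagonal with determinant `∏ φ' (t j) ≥ 0`; the claim is
the change of variables formula for this map. When `c = d` the value of `φ'` is unconstrained,
but then both simplices are null sets (or, for `m = 0`, single points carrying the empty product).
-/

open MeasureTheory

/-- The simplex `{t : 0 ≤ t 0 ≤ t 1 ≤ ⋯ ≤ t (m-1) ≤ 1}` of nondecreasing
`m`-tuples with entries in `[a,b]`. -/
def simplex (m : ℕ) (a b : ℝ) : Set (Fin m → ℝ) :=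
  {t | (∀ j, t j ∈ Set.Icc a b) ∧ ∀ j k : Fin m, j ≤ k → t j ≤ t k}

open Set

theorem isClosed_simplex (m : ℕ) (a b : ℝ) : IsClosed (simplex m a b) := by
  simp only [simplex, ofPred_and, ofPred_forall]
  exact (isClosed_iInter fun j => isClosed_Icc.preimage (continuous_apply j)).inter
    (isClosed_iInter fun j => isClosed_iInter fun k => isClosed_iInter fun _ =>
      isClosed_le (continuous_apply j) (continuous_apply k))

theorem simplex_subset_pi_Icc (m : ℕ) (a b : ℝ) : simplex m a b ⊆ univ.pi fun _ => Icc a b :=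
  fun _ ht j _ => ht.1 j

theorem volume_simplex_self {m : ℕ} (hm : m ≠ 0) (x : ℝ) : volume (simplex m x x) = 0 := by
  refine measure_mono_null (simplex_subset_pi_Icc m x x) ?_
  simp [volume_pi_pi, hm]

theorem image_simplex_of_strictMonoOn {m : ℕ} {a b c d : ℝ} {φ : ℝ → ℝ} (hcd : c ≤ d)
    (hφ : ContinuousOn φ (Icc c d)) (hmono : StrictMonoOn φ (Icc c d))
    (hc : φ c = a) (hd : φ d = b) :
    (fun t j => φ (t j)) '' simplex m c d = simplex m a b := by
  subst hc hd
  apply Subset.antisymm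
  · rintro _ ⟨t, ht, rfl⟩
    refine ⟨fun j => ⟨?_, ?_⟩, fun j k hjk =>
      hmono.monotoneOn (ht.1 j) (ht.1 k) (ht.2 j k hjk)⟩
    · exact hmono.monotoneOn (left_mem_Icc.mpr hcd) (ht.1 j) (ht.1 j).1
    · exact hmono.monotoneOn (ht.1 j) (right_mem_Icc.mpr hcd) (ht.1 j).2
  · intro s hs
    choose t htIcc htφ using fun j => intermediate_value_Icc hcd hφ (hs.1 j)
    refine ⟨t, ⟨htIcc, fun j k hjk => ?_⟩, funext htφ⟩
    rw [← hmono.le_iff_le (htIcc j) (htIcc k), htφ j, htφ k]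
    exact hs.2 j k hjk

section Diagonal

variable {𝕜 : Type*} [NontriviallyNormedField 𝕜] {ι : Type*} [Fintype ι]

theorem det_pi_smul_proj [DecidableEq ι] (x : ι → 𝕜) :
    (ContinuousLinearMap.pi fun j =>
      x j • ContinuousLinearMap.proj (R := 𝕜) (φ := fun _ : ι => 𝕜) j).det =
      ∏ j, x j := by
  rw [ContinuousLinearMap.det, ← Matrix.det_diagonal, ← LinearMap.det_toLin']
  congr 1
  ext v j
  simp [Matrix.mulVec_diagonal]

theorem hasFDerivWithinAt_pi_comp {φ φ' : 𝕜 → 𝕜} {s : Set 𝕜} {t : ι → 𝕜}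
    (hφ : ∀ j, HasDerivWithinAt φ (φ' (t j)) s (t j)) :
    HasFDerivWithinAt (fun u j => φ (u j))
      (ContinuousLinearMap.pi fun j =>
        φ' (t j) • ContinuousLinearMap.proj (R := 𝕜) (φ := fun _ : ι => 𝕜) j)
      (univ.pi fun _ => s) t :=
  hasFDerivWithinAt_pi.mpr fun j =>
    (hφ j).comp_hasFDerivWithinAt t (hasFDerivWithinAt_apply j t _) fun _ hu => hu j (mem_univ j)

end Diagonal

theorem setIntegral_simplex_comp_of_strictMonoOn {E : Type*} [NormedAddCommGroup E]
    [NormedSpace ℝ E] {m : ℕ} {a b c d : ℝ} {φ φ' : ℝ → ℝ} (hcd : c < d)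
    (hφ : ∀ t ∈ Icc c d, HasDerivWithinAt φ (φ' t) (Icc c d) t)
    (hmono : StrictMonoOn φ (Icc c d)) (hc : φ c = a) (hd : φ d = b)
    (g : (Fin m → ℝ) → E) :
    ∫ t in simplex m c d, (∏ j, φ' (t j)) • g (fun j => φ (t j)) =
      ∫ s in simplex m a b, g s := by
  have hφ'_nonneg : ∀ t ∈ Icc c d, 0 ≤ φ' t := fun t ht =>
    (hφ t ht).nonneg_of_monotoneOn (uniqueDiffWithinAt_iff_accPt.mp (uniqueDiffOn_Icc hcd t ht))
      hmono.monotoneOn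
  have hinj : InjOn (fun t j => φ (t j)) (simplex m c d) := fun s hs t ht hst =>
    funext fun j => hmono.injOn (hs.1 j) (ht.1 j) (congrFun hst j)
  have hmeas := (isClosed_simplex m c d).measurableSet
  rw [← image_simplex_of_strictMonoOn hcd.le (fun t ht => (hφ t ht).continuousWithinAt) hmono
    hc hd, integral_image_eq_integral_abs_det_fderiv_smul volume hmeas
      (fun t ht => (hasFDerivWithinAt_pi_comp fun j => hφ (t j) (ht.1 j)).mono
        (simplex_subset_pi_Icc m c d)) hinj g]
  refine setIntegral_congr_fun hmeas fun t ht => ?_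
  rw [det_pi_smul_proj, abs_of_nonneg (Finset.prod_nonneg fun j _ => hφ'_nonneg _ (ht.1 j))]

theorem signature_reparametrization_invariance_general
    (N : ℕ) (a b c d : ℝ) (hcd : c ≤ d)
    (f : ℝ → Fin N → ℝ)
    (φ φ' : ℝ → ℝ)
    (hφ : ∀ t ∈ Set.Icc c d, HasDerivWithinAt φ (φ' t) (Set.Icc c d) t)
    (hmono : StrictMonoOn φ (Set.Icc c d))
    (hc : φ c = a) (hd : φ d = b)
    (m : ℕ) (I : Fin m → Fin N) :
    (∫ t in simplex m c d, ∏ j, (f (φ (t j)) (I j) * φ' (t j))) =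
      ∫ s in simplex m a b, ∏ j, f (s j) (I j) := by
  rcases hcd.eq_or_lt with rfl | hcd
  · obtain rfl : a = b := hc.symm.trans hd
    rcases eq_or_ne m 0 with rfl | hm
    · simp [simplex]
    · simp [Measure.restrict_eq_zero.mpr (volume_simplex_self hm _)]
  · rw [← setIntegral_simplex_comp_of_strictMonoOn hcd hφ hmono hc hd]
    simp_rw [smul_eq_mul, ← Finset.prod_mul_distrib, mul_comm]

/-- **Reparametrization invariance of the path signature.**
If `f : [a,b] → ℝ^N` is continuous and `φ : [c,d] → [a,b]` is a strictly increasing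
continuously differentiable surjection, then for every multi-index `I`,
the iterated integral of `∏ f_{I j}(φ(t_j)) φ'(t_j)` over the simplex in `[c,d]`
equals the iterated integral of `∏ f_{I j}(s_j)` over the simplex in `[a,b]`. -/
theorem signature_reparametrization_invariance
    (N : ℕ) (a b c d : ℝ) (hab : a ≤ b) (hcd : c ≤ d)
    (f : ℝ → Fin N → ℝ) (hf : ContinuousOn f (Set.Icc a b))
    (φ φ' : ℝ → ℝ)
    (hφ : ∀ t ∈ Set.Icc c d, HasDerivWithinAt φ (φ' t) (Set.Icc c d) t)
    (hφ' : ContinuousOn φ' (Set.Icc c d))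
    (hmono : StrictMonoOn φ (Set.Icc c d))
    (hc : φ c = a) (hd : φ d = b)
    (m : ℕ) (I : Fin m → Fin N) :
    (∫ t in simplex m c d, ∏ j, (f (φ (t j)) (I j) * φ' (t j))) =
      ∫ s in simplex m a b, ∏ j, f (s j) (I j) :=
  signature_reparametrization_invariance_general N a b c d hcd f φ φ' hφ hmono hc hd m I
end

section
/- Let N, T, M ∈ ℕ with M ≥ 1 and let a, b : {1,…,T} → ℝ^N. Define Q̂_0(s,t) := 1 for all 0 ≤ s,t ≤ T, and recursively for 1 ≤ m ≤ M: Q̂_m(s,t) := 1 + Σ_{s'=1}^{s} Σ_{t'=1}^{t} Q̂_{m-1}(s'-1, t'-1) ⟨a(s'), b(t')⟩. Then Q̂_M(T,T) = Σ_{m=0}^{M} Σ_{|I|=m} Ŝ^I(a) Ŝ^I(b), the discrete signature kernel truncated at level M. (Horner-type recursion for efficient computation of the discrete signature kernel, requiring O(T²·M) operations.) -/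
/-!
Sorting the strictly increasing tuples of a multi-index `(J, c)` by the position `s'` of their
last entry gives `Ŝ_s^{(J,c)}(a) = Σ_{s' ≤ s} Ŝ_{s'-1}^J(a) a(s')_c`. Multiplying two such
expansions and summing over `(J, c)` expresses level `m + 1` of the kernel of `a|[1,s]`
and `b|[1,t]` as `Σ_{s' ≤ s, t' ≤ t}` (level `m` of `a|[1,s'-1]` and `b|[1,t'-1]`)
`⟨a(s'), b(t')⟩`, which is the recursion defining `Q̂`; induction on `M` then identifies
`Q̂_M(s, t)` with the truncated kernel for all `s, t`.
-/

/-- The discrete signature coefficient of `a : {1,…,T} → ℝ^N` (a discrete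
derivative, indexed here by `a 1, …, a T`) with respect to a multi-index
`I = (i_1,…,i_m)`: the sum of `a(t_1)_{i_1} ⋯ a(t_m)_{i_m}` over all strictly
increasing tuples `1 ≤ t_1 < ⋯ < t_m ≤ T`; for the empty multi-index it is `1`. -/
noncomputable def hatS {N : ℕ} (T : ℕ) (a : ℕ → Fin N → ℝ) {m : ℕ}
    (I : Fin m → Fin N) : ℝ :=
  open scoped Classical in
  ∑ t ∈ Finset.univ.filter (fun t : Fin m → Fin T => StrictMono t),
    ∏ j, a ((t j : ℕ) + 1) (I j)

/-- The Horner-type recursion for the discrete signature kernel: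
`Q̂_0(s,t) = 1` and
`Q̂_m(s,t) = 1 + Σ_{s'=1}^s Σ_{t'=1}^t Q̂_{m-1}(s'-1,t'-1) ⟨a(s'), b(t')⟩`. -/
noncomputable def Qhat {N : ℕ} (a b : ℕ → Fin N → ℝ) : ℕ → ℕ → ℕ → ℝ
  | 0, _, _ => 1
  | m + 1, s, t =>
      1 + ∑ s' ∈ Finset.Icc 1 s, ∑ t' ∈ Finset.Icc 1 t,
            Qhat a b m (s' - 1) (t' - 1) * ∑ c, a s' c * b t' c

theorem Fin.strictMono_snoc {α : Type*} [Preorder α] {n : ℕ} {f : Fin n → α} {x : α}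
    (hf : StrictMono f) (hx : ∀ i, f i < x) : StrictMono (Fin.snoc (α := fun _ => α) f x) := by
  intro i j hij
  obtain ⟨i, rfl⟩ | rfl := i.eq_castSucc_or_eq_last
  · obtain ⟨j, rfl⟩ | rfl := j.eq_castSucc_or_eq_last
    · simpa using hf (Fin.castSucc_lt_castSucc_iff.1 hij)
    · simpa using hx i
  · exact absurd hij (Fin.le_last j).not_gt

open Finset

section StrictMonoTuples

open scoped Classical

variable {R : Type*} [AddCommMonoid R] {m s : ℕ}

theorem sum_strictMono_last_ne_last (F : (Fin (m + 1) → Fin (s + 1)) → R) :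
    ∑ t ∈ univ.filter (fun t : Fin (m + 1) → Fin (s + 1) =>
        StrictMono t ∧ t (Fin.last m) ≠ Fin.last s), F t =
      ∑ t ∈ univ.filter (fun t : Fin (m + 1) → Fin s => StrictMono t),
        F (Fin.castSucc ∘ t) := by
  symm
  refine sum_bij (fun t _ => Fin.castSucc ∘ t) ?_ ?_ ?_ (fun _ _ => rfl)
  · simp only [mem_filter, mem_univ, true_and]
    intro t ht
    exact ⟨Fin.strictMono_castSucc.comp ht, Fin.castSucc_ne_last _⟩
  · intro t₁ _ t₂ _ h
    exact funext fun j => Fin.castSucc_injective _ (congrFun h j)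
  · simp only [mem_filter, mem_univ, true_and]
    rintro t ⟨ht, hlast⟩
    have hne (j : Fin (m + 1)) : t j ≠ Fin.last s :=
      ((ht.monotone (Fin.le_last j)).trans_lt (Fin.lt_last_iff_ne_last.2 hlast)).ne
    exact ⟨fun j => (t j).castPred (hne j), fun _ _ h => ht h, funext fun j => by simp⟩

theorem sum_strictMono_last_eq_last (F : (Fin (m + 1) → Fin (s + 1)) → R) :
    ∑ t ∈ univ.filter (fun t : Fin (m + 1) → Fin (s + 1) =>
        StrictMono t ∧ t (Fin.last m) = Fin.last s), F t =
      ∑ t ∈ univ.filter (fun t : Fin m → Fin s => StrictMono t),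
        F (Fin.snoc (Fin.castSucc ∘ t) (Fin.last s)) := by
  symm
  refine sum_bij (fun t _ => Fin.snoc (Fin.castSucc ∘ t) (Fin.last s)) ?_ ?_ ?_ (fun _ _ => rfl)
  · simp only [mem_filter, mem_univ, true_and]
    intro t ht
    exact ⟨Fin.strictMono_snoc (Fin.strictMono_castSucc.comp ht)
      fun j => Fin.castSucc_lt_last (t j), Fin.snoc_last _ _⟩
  · intro t₁ _ t₂ _ h
    have := congrArg Fin.init h
    simp only [Fin.init_snoc] at this
    exact funext fun j => Fin.castSucc_injective _ (congrFun this j)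
  · simp only [mem_filter, mem_univ, true_and]
    rintro t ⟨ht, hlast⟩
    have hne (j : Fin m) : t j.castSucc ≠ Fin.last s :=
      hlast ▸ (ht (Fin.castSucc_lt_last j)).ne
    refine ⟨fun j => (t j.castSucc).castPred (hne j),
      fun _ _ h => ht (Fin.castSucc_lt_castSucc_iff.2 h), ?_⟩
    conv_rhs => rw [← Fin.snoc_init_self t, hlast]
    rfl

end StrictMonoTuples

section Signature

variable {N : ℕ} (a : ℕ → Fin N → ℝ)

theorem hatS_nil (T : ℕ) (I : Fin 0 → Fin N) : hatS T a I = 1 := by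
  simp [hatS, Subsingleton.strictMono]

theorem hatS_zero {m : ℕ} (I : Fin (m + 1) → Fin N) : hatS 0 a I = 0 := by
  simp [hatS]

theorem hatS_succ (s : ℕ) {m : ℕ} (J : Fin m → Fin N) (c : Fin N) :
    hatS (s + 1) a (Fin.snoc J c) = hatS s a (Fin.snoc J c) + hatS s a J * a (s + 1) c := by
  classical
  rw [hatS, hatS, hatS, ← sum_filter_add_sum_filter_not _ (fun t => t (Fin.last m) = Fin.last s),
    filter_filter, filter_filter, sum_strictMono_last_eq_last, sum_strictMono_last_ne_last,
    add_comm, sum_mul]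
  congr 1
  refine sum_congr rfl fun t _ => ?_
  simp [Fin.prod_univ_castSucc]

theorem hatS_snoc (s : ℕ) {m : ℕ} (J : Fin m → Fin N) (c : Fin N) :
    hatS s a (Fin.snoc J c) = ∑ s' ∈ Icc 1 s, hatS (s' - 1) a J * a s' c := by
  induction s with
  | zero => simp [hatS_zero]
  | succ s ih => rw [hatS_succ, ih, sum_Icc_succ_top (Nat.le_add_left 1 s), Nat.add_sub_cancel]

theorem sum_hatS_mul_hatS_succ (b : ℕ → Fin N → ℝ) (m s t : ℕ) :
    ∑ I : Fin (m + 1) → Fin N, hatS s a I * hatS t b I =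
      ∑ s' ∈ Icc 1 s, ∑ t' ∈ Icc 1 t,
        (∑ J : Fin m → Fin N, hatS (s' - 1) a J * hatS (t' - 1) b J) *
          ∑ c, a s' c * b t' c := by
  rw [← (Fin.snocEquiv fun _ => Fin N).sum_comp, Fintype.sum_prod_type]
  change ∑ c, ∑ J, hatS s a (Fin.snoc J c) * hatS t b (Fin.snoc J c) = _
  simp only [hatS_snoc, sum_mul, mul_sum]
  simp_rw [sum_comm (s := (univ : Finset (Fin N))),
    sum_comm (s := (univ : Finset (Fin m → Fin N))), mul_mul_mul_comm]
  exact sum_comm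

theorem Qhat_eq_sum_hatS_mul_hatS (b : ℕ → Fin N → ℝ) (M s t : ℕ) :
    Qhat a b M s t = ∑ m ∈ range (M + 1), ∑ I : Fin m → Fin N, hatS s a I * hatS t b I := by
  induction M generalizing s t with
  | zero => simp [Qhat, hatS_nil]
  | succ M ih =>
    rw [Qhat, sum_range_succ', add_comm]
    congr 1
    · simp only [ih, sum_mul, sum_hatS_mul_hatS_succ]
      exact sum_comm_cycle
    · simp [hatS_nil]

end Signature

theorem discrete_signature_kernel_horner_general (N T M : ℕ)
    (a b : ℕ → Fin N → ℝ) :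
    Qhat a b M T T =
      ∑ m ∈ Finset.range (M + 1), ∑ I : Fin m → Fin N, hatS T a I * hatS T b I :=
  Qhat_eq_sum_hatS_mul_hatS a b M T T

/-- **Horner-type recursion computes the discrete signature kernel truncated at
level `M`**: `Q̂_M(T,T) = Σ_{m=0}^M Σ_{|I|=m} Ŝ^I(a) Ŝ^I(b)`. -/
theorem discrete_signature_kernel_horner (N T M : ℕ) (hM : 1 ≤ M)
    (a b : ℕ → Fin N → ℝ) :
    Qhat a b M T T =
      ∑ m ∈ Finset.range (M + 1), ∑ I : Fin m → Fin N, hatS T a I * hatS T b I :=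
  discrete_signature_kernel_horner_general N T M a b
end

section
/- Let N, T ∈ ℕ and v_1, …, v_T ∈ ℝ^N, and let f : [0,T] → ℝ^N be the piecewise-constant function with f(t) = v_r for t ∈ [r−1, r). Then for every multi-index I = (i_1,…,i_m), S^I_{[0,T]}(f) = Σ ∏_{r=1}^{T} ( v_r^{i_{j_{r-1}+1}} v_r^{i_{j_{r-1}+2}} ⋯ v_r^{i_{j_r}} / (j_r − j_{r-1})! ), where the sum is over all non-decreasing integer sequences 0 = j_0 ≤ j_1 ≤ ⋯ ≤ j_T = m, and v_r^{i} denotes the i-th coordinate of v_r. (The path signature of a discrete time series, interpreted as a concatenation of exponential paths with constant Lie-algebra derivatives v_1,…,v_T, equals the tensor product of tensor exponentials: S(γ̂) = exp_⊗(v_1) ⊗ ⋯ ⊗ exp_⊗(v_T).) -/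
/-!
Induction on `T`. Cutting `[0, T + 1]` at `T` decomposes the simplex, up to a null set, into the
products `Δ_p[0, T] × Δ_{m-p}[T, T + 1]` according to how many of the times `t_j` lie below `T`
(Chen's identity). On the second factor the integrand is the constant `v_{T+1}^{i_{p+1}} ⋯ v_{T+1}^{i_m}`
and the simplex has volume `1 / (m - p)!`; the induction hypothesis handles the first factor.
Grouping the sequences `j` by the value `j_T = p` gives the same recursion for the right-hand side.
-/

open MeasureTheory

open Set
open scoped Finset

lemma measurableSet_simplex (m : ℕ) (a b : ℝ) : MeasurableSet (simplex m a b) :=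
  measurableSet_setOfPred.2 (by fun_prop (disch := exact measurableSet_Icc))

lemma ae_restrict_simplex_mem_Ico (m : ℕ) (a b : ℝ) :
    ∀ᵐ t ∂(volume.restrict (simplex m a b)), ∀ j, t j ∈ Ico a b := by
  rw [ae_restrict_iff' (measurableSet_simplex m a b)]
  filter_upwards [ae_all_iff.2 fun j => Measure.ae_eval_ne (fun _ : Fin m => volume) j b]
    with t hne ht j
  exact ⟨(ht.1 j).1, (ht.1 j).2.lt_of_ne (hne j)⟩

lemma cons_mem_simplex_iff {k : ℕ} {a b x : ℝ} {y : Fin k → ℝ} :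
    (Fin.cons x y : Fin (k + 1) → ℝ) ∈ simplex (k + 1) a b ↔ x ∈ Icc a b ∧ y ∈ simplex k x b := by
  simp only [simplex, Set.mem_ofPred_eq, Fin.forall_fin_succ, Fin.cons_zero, Fin.cons_succ,
    Fin.succ_le_succ_iff, Fin.zero_le, le_refl, Set.mem_Icc, forall_const, Fin.succ_ne_zero,
    Fin.le_zero_iff, true_and, false_implies]
  constructor
  · rintro ⟨⟨hx, hy⟩, hxy, hmono⟩
    exact ⟨hx, fun i => ⟨hxy i, (hy i).2⟩, hmono⟩
  · rintro ⟨hx, hy, hmono⟩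
    exact ⟨⟨hx, fun i => ⟨hx.1.trans (hy i).1, (hy i).2⟩⟩, fun i => (hy i).1, hmono⟩

lemma volume_simplex (m : ℕ) {a b : ℝ} (hab : a ≤ b) :
    volume (simplex m a b) = ENNReal.ofReal ((b - a) ^ m / m.factorial) := by
  induction m generalizing a with
  | zero =>
    have : simplex 0 a b = univ := eq_univ_of_forall fun t => ⟨finZeroElim, finZeroElim⟩
    simp [this, volume_pi]
  | succ k ih =>
    let e := MeasurableEquiv.piFinSuccAbove (fun _ : Fin (k + 1) => ℝ) 0
    let S := e.symm ⁻¹' simplex (k + 1) a b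
    have hS : MeasurableSet S := e.symm.measurable (measurableSet_simplex _ _ _)
    have hslice : ∀ x, Prod.mk x ⁻¹' S = if x ∈ Icc a b then simplex k x b else ∅ := by
      intro x
      ext y
      have : e.symm (x, y) = Fin.cons x y := Fin.insertNth_zero' x y
      split_ifs with hx <;> simp [S, this, cons_mem_simplex_iff, hx]
    calc volume (simplex (k + 1) a b) = volume (e ⁻¹' S) := by
          rw [← preimage_comp, e.symm_comp_self, preimage_id]
      _ = (volume.prod volume) S :=
          (volume_preserving_piFinSuccAbove (fun _ => ℝ) 0).measure_preimage hS.nullMeasurableSet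
      _ = ∫⁻ x in Icc a b, ENNReal.ofReal ((b - x) ^ k / k.factorial) := by
          rw [Measure.prod_apply hS, ← lintegral_indicator measurableSet_Icc]
          refine lintegral_congr fun x => ?_
          by_cases hx : x ∈ Icc a b
          · simp [hslice, hx, ih hx.2]
          · simp [hslice, hx]
      _ = ENNReal.ofReal ((b - a) ^ (k + 1) / (k + 1).factorial) := by
          have hcont : Continuous fun x : ℝ => (b - x) ^ k / k.factorial := by fun_prop
          rw [← ofReal_integral_eq_lintegral_ofReal hcont.integrableOn_Icc
            ((ae_restrict_iff' measurableSet_Icc).2 (.of_forall fun x hx =>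
              div_nonneg (pow_nonneg (sub_nonneg.2 hx.2) k) (Nat.cast_nonneg _))),
            integral_Icc_eq_integral_Ioc, ← intervalIntegral.integral_of_le hab,
            intervalIntegral.integral_div, intervalIntegral.integral_comp_sub_left (· ^ k) b,
            integral_pow, Nat.factorial_succ]
          congr 1
          field_simp
          push_cast
          ring

lemma setIntegral_simplex_prod_of_eqOn_Ico {k : ℕ} {a b : ℝ} (hab : a ≤ b)
    (w : Fin k → ℝ → ℝ) (C : Fin k → ℝ) (hw : ∀ i, ∀ x ∈ Ico a b, w i x = C i) :
    ∫ y in simplex k a b, ∏ i, w i (y i) = (b - a) ^ k / k.factorial * ∏ i, C i := by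
  rw [integral_congr_ae ((ae_restrict_simplex_mem_Ico k a b).mono fun y hy =>
      Finset.prod_congr rfl fun i _ => hw i (y i) (hy i)),
    setIntegral_const, measureReal_def, volume_simplex k hab,
    ENNReal.toReal_ofReal (by have := sub_nonneg.2 hab; positivity), smul_eq_mul]

lemma Monotone.lt_iff_lt_card_filter_lt {m : ℕ} {α : Type*} [LinearOrder α] {t : Fin m → α}
    (ht : Monotone t) (c : α) (j : Fin m) : t j < c ↔ (j : ℕ) < #{k | t k < c} := by
  constructor
  · intro hj
    have : Finset.Iic j ⊆ Finset.univ.filter (t · < c) := fun k hk =>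
      Finset.mem_filter.2 ⟨Finset.mem_univ k, (ht (Finset.mem_Iic.1 hk)).trans_lt hj⟩
    simpa [Nat.lt_succ_iff] using Finset.card_le_card this
  · intro hj
    by_contra hc
    have : Finset.univ.filter (t · < c) ⊆ Finset.Iio j := fun k hk =>
      Finset.mem_Iio.2 (lt_of_not_ge fun hjk => hc ((ht hjk).trans_lt (Finset.mem_filter.1 hk).2))
    exact (Finset.card_le_card this).not_gt (by rwa [Fin.card_Iio])

def simplexSplit (m p : ℕ) (a c b : ℝ) : Set (Fin m → ℝ) :=
  {t | t ∈ simplex m a b ∧ ∀ j : Fin m, ((j : ℕ) < p → t j ≤ c) ∧ (p ≤ (j : ℕ) → c ≤ t j)}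

lemma measurableSet_simplexSplit (m p : ℕ) (a c b : ℝ) :
    MeasurableSet (simplexSplit m p a c b) :=
  measurableSet_setOfPred.2 (by have := measurableSet_simplex m a b; fun_prop)

lemma iUnion_simplexSplit (m : ℕ) (a c b : ℝ) :
    ⋃ p : Fin (m + 1), simplexSplit m p a c b = simplex m a b := by
  refine Subset.antisymm (iUnion_subset fun p t ht => ht.1) fun t ht => ?_
  have hmono : Monotone t := fun j k hjk => ht.2 j k hjk
  have hcard : #{k | t k < c} < m + 1 :=
    Nat.lt_succ_of_le ((Finset.card_le_univ _).trans_eq (Fintype.card_fin m))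
  refine mem_iUnion.2 ⟨⟨_, hcard⟩, ht, fun j => ⟨fun hj => ?_, fun hj => ?_⟩⟩
  · exact ((hmono.lt_iff_lt_card_filter_lt c j).2 hj).le
  · exact not_lt.1 fun h => (hj.trans_lt ((hmono.lt_iff_lt_card_filter_lt c j).1 h)).false

lemma aedisjoint_simplexSplit (m : ℕ) (a c b : ℝ) :
    Pairwise (Function.onFun (AEDisjoint volume)
      fun p : Fin (m + 1) => simplexSplit m p a c b) := by
  have key : ∀ p q : Fin (m + 1), p < q →
      AEDisjoint volume (simplexSplit m p a c b) (simplexSplit m q a c b) := by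
    intro p q hpq
    have hp : (p : ℕ) < m := (Fin.lt_def.1 hpq).trans_le (Nat.lt_succ_iff.1 q.isLt)
    refine measure_mono_null (fun t ht => ?_) (Measure.pi_hyperplane _ ⟨p, hp⟩ c)
    exact le_antisymm ((ht.2.2 ⟨p, hp⟩).1 hpq) ((ht.1.2 ⟨p, hp⟩).2 le_rfl)
  intro p q hpq
  rcases hpq.lt_or_gt with h | h
  · exact key p q h
  · exact (key q p h).symm

lemma mem_simplexSplit_add_iff {p q : ℕ} {a c b : ℝ} (hac : a ≤ c) (hcb : c ≤ b)
    (t : Fin (p + q) → ℝ) :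
    t ∈ simplexSplit (p + q) p a c b ↔
      (fun i => t (Fin.castAdd q i)) ∈ simplex p a c ∧
        (fun i => t (Fin.natAdd p i)) ∈ simplex q c b := by
  simp only [simplexSplit, simplex, Set.mem_ofPred_eq, Fin.forall_fin_add, Fin.val_castAdd,
    Fin.val_natAdd, Set.mem_Icc, Fin.is_lt, true_implies, le_add_iff_nonneg_right, zero_le,
    add_lt_iff_neg_left, not_lt_zero, false_implies, true_and]
  constructor
  · rintro ⟨⟨⟨ha, hb⟩, hma, hmb⟩, hlo, hhi⟩
    exact ⟨⟨fun i => ⟨(ha i).1, (hlo i).1⟩, fun i k h => (hma i).1 k h⟩,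
      ⟨fun j => ⟨hhi j, (hb j).2⟩, fun j k h => (hmb j).2 k ((Fin.natAdd_le_natAdd_iff p).2 h)⟩⟩
  · rintro ⟨⟨ha, hma⟩, hb, hmb⟩
    refine ⟨⟨⟨fun i => ⟨(ha i).1, (ha i).2.trans hcb⟩, fun j => ⟨hac.trans (hb j).1, (hb j).2⟩⟩,
      fun i => ⟨fun k h => hma i k h, fun j _ => (ha i).2.trans (hb j).1⟩,
      fun j => ⟨fun i h => ?_, fun k h => hmb j k ((Fin.natAdd_le_natAdd_iff p).1 h)⟩⟩,
      fun i => ⟨(ha i).2, fun h => absurd i.isLt h.not_gt⟩, fun j => (hb j).1⟩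
    have := i.isLt
    rw [Fin.le_def, Fin.val_natAdd, Fin.val_castAdd] at h
    omega

lemma setIntegral_simplexSplit {m p q : ℕ} (hm : p + q = m) {a c b : ℝ} (hac : a ≤ c)
    (hcb : c ≤ b) (g : ℕ → ℝ → ℝ) :
    ∫ t in simplexSplit m p a c b, ∏ j : Fin m, g j (t j) =
      (∫ x in simplex p a c, ∏ i : Fin p, g i (x i)) *
        ∫ y in simplex q c b, ∏ i : Fin q, g (p + i) (y i) := by
  subst hm
  let e : (Fin (p + q) → ℝ) ≃ᵐ (Fin p → ℝ) × (Fin q → ℝ) :=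
    (MeasurableEquiv.piCongrLeft (fun _ => ℝ) finSumFinEquiv).symm.trans
      (MeasurableEquiv.sumPiEquivProdPi fun _ => ℝ)
  have he : MeasurePreserving e volume volume :=
    (volume_measurePreserving_sumPiEquivProdPi _).comp
      (volume_measurePreserving_piCongrLeft _ finSumFinEquiv).symm
  have hset : simplexSplit (p + q) p a c b = e ⁻¹' (simplex p a c ×ˢ simplex q c b) :=
    Set.ext (mem_simplexSplit_add_iff hac hcb)
  have hprod : ∀ t, ∏ j : Fin (p + q), g j (t j) =
      (∏ i : Fin p, g i ((e t).1 i)) * ∏ i : Fin q, g (p + i) ((e t).2 i) :=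
    fun t => Fin.prod_univ_add _
  rw [hset, integral_congr_ae (.of_forall hprod),
    he.setIntegral_preimage_emb e.measurableEmbedding
      (fun z => (∏ i : Fin p, g i (z.1 i)) * ∏ i : Fin q, g (p + i) (z.2 i)),
    Measure.volume_eq_prod]
  exact setIntegral_prod_mul (fun x : Fin p → ℝ => ∏ i : Fin p, g i (x i))
    (fun y : Fin q → ℝ => ∏ i : Fin q, g (p + i) (y i)) _ _

/-- Chen's identity for the iterated integrals of `g 0, g 1, …`, cutting `[a, b]` at `c`. -/
theorem setIntegral_simplex_prod_eq_sum {m : ℕ} {a c b : ℝ} (hac : a ≤ c) (hcb : c ≤ b)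
    (g : ℕ → ℝ → ℝ)
    (hg : IntegrableOn (fun t : Fin m → ℝ => ∏ j : Fin m, g j (t j)) (simplex m a b)) :
    ∫ t in simplex m a b, ∏ j : Fin m, g j (t j) =
      ∑ p ∈ Finset.range (m + 1), (∫ x in simplex p a c, ∏ i : Fin p, g i (x i)) *
        ∫ y in simplex (m - p) c b, ∏ i : Fin (m - p), g (p + i) (y i) := by
  rw [← iUnion_simplexSplit m a c b] at hg ⊢
  rw [integral_iUnion_ae (s := fun p : Fin (m + 1) => simplexSplit m p a c b)
      (fun p => (measurableSet_simplexSplit m p a c b).nullMeasurableSet)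
      (aedisjoint_simplexSplit m a c b) hg, tsum_fintype,
    ← Fin.sum_univ_eq_sum_range (fun p => (∫ x in simplex p a c, ∏ i : Fin p, g i (x i)) *
        ∫ y in simplex (m - p) c b, ∏ i : Fin (m - p), g (p + i) (y i))]
  exact Finset.sum_congr rfl fun p _ =>
    setIntegral_simplexSplit (Nat.add_sub_of_le (Nat.lt_succ_iff.1 p.isLt)) hac hcb g

open scoped Classical in
def monotonePaths (T m : ℕ) : Finset (Fin (T + 1) → Fin (m + 1)) :=
  Finset.univ.filter fun j => (∀ p q, p ≤ q → j p ≤ j q) ∧ j 0 = 0 ∧ j (Fin.last T) = Fin.last m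

lemma mem_monotonePaths {T m : ℕ} {j : Fin (T + 1) → Fin (m + 1)} :
    j ∈ monotonePaths T m ↔ Monotone j ∧ j 0 = 0 ∧ j (Fin.last T) = Fin.last m := by
  simp [monotonePaths, Monotone]

def monotonePathSum (w : ℕ → ℕ → ℕ → ℝ) (T m : ℕ) : ℝ :=
  ∑ j ∈ monotonePaths T m, ∏ r : Fin T, w r (j r.castSucc) (j r.succ)

lemma monotonePathSum_zero (w : ℕ → ℕ → ℕ → ℝ) (m : ℕ) :
    monotonePathSum w 0 m = if m = 0 then 1 else 0 := by
  rcases m with _ | m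
  · simp [monotonePathSum, monotonePaths, Subsingleton.elim _ (0 : Fin 1)]
  · refine Finset.sum_eq_zero fun j hj => absurd ?_ (Fin.last_pos (n := m)).ne
    obtain ⟨-, h0, hlast⟩ := mem_monotonePaths.1 hj
    exact h0.symm.trans hlast

lemma snoc_castLE_mem_monotonePaths {T m p : ℕ} (hp : p ≤ m) {j : Fin (T + 1) → Fin (p + 1)}
    (hj : j ∈ monotonePaths T p) :
    Fin.snoc (α := fun _ => Fin (m + 1)) (Fin.castLE (Nat.succ_le_succ hp) ∘ j) (Fin.last m) ∈
      monotonePaths (T + 1) m := by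
  obtain ⟨hmono, h0, -⟩ := mem_monotonePaths.1 hj
  refine mem_monotonePaths.2 ⟨Fin.monotone_iff_le_succ.2 fun i => ?_, ?_, Fin.snoc_last _ _⟩
  · cases i using Fin.lastCases with
    | last => simpa only [Fin.succ_last, Fin.snoc_last] using Fin.le_last _
    | cast k =>
      rw [Fin.succ_castSucc, Fin.snoc_castSucc, Fin.snoc_castSucc]
      exact hmono (Fin.castSucc_le_succ k)
  · rw [← Fin.castSucc_zero, Fin.snoc_castSucc]
    exact Fin.ext (by simp [h0])

lemma monotonePathSum_succ (w : ℕ → ℕ → ℕ → ℝ) (T m : ℕ) :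
    monotonePathSum w (T + 1) m =
      ∑ p ∈ Finset.range (m + 1), monotonePathSum w T p * w T p m := by
  rw [← Fin.sum_univ_eq_sum_range (fun p => monotonePathSum w T p * w T p m), monotonePathSum,
    ← Finset.sum_fiberwise (monotonePaths (T + 1) m) fun j => j (Fin.last T).castSucc]
  refine Finset.sum_congr rfl fun p _ => ?_
  have hp : (p : ℕ) ≤ m := Nat.lt_succ_iff.1 p.isLt
  rw [monotonePathSum, Finset.sum_mul]
  have hfiber : ∀ j ∈ {j ∈ monotonePaths (T + 1) m | j (Fin.last T).castSucc = p},
      Monotone j ∧ j (Fin.last (T + 1)) = Fin.last m ∧ j (Fin.last T).castSucc = p := by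
    intro j hj
    rw [Finset.mem_filter, mem_monotonePaths] at hj
    exact ⟨hj.1.1, hj.1.2.2, hj.2⟩
  have hle : ∀ j ∈ {j ∈ monotonePaths (T + 1) m | j (Fin.last T).castSucc = p},
      ∀ r : Fin (T + 1), (j r.castSucc : ℕ) ≤ p := fun j hj r =>
    (hfiber j hj).2.2 ▸ (hfiber j hj).1 (Fin.castSucc_le_castSucc_iff.2 (Fin.le_last r))
  refine Finset.sum_nbij' (fun j r => ⟨min (j r.castSucc) p, by omega⟩)
    (fun j => Fin.snoc (α := fun _ => Fin (m + 1)) (Fin.castLE (by omega) ∘ j) (Fin.last m))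
    (fun j hj => ?_) (fun j hj => ?_) (fun j hj => ?_) (fun j hj => ?_) (fun j hj => ?_)
  · obtain ⟨hmono, h0, -⟩ := mem_monotonePaths.1 (Finset.mem_filter.1 hj).1
    refine mem_monotonePaths.2 ⟨fun a b hab => Fin.mk_le_mk.2 ?_, Fin.ext ?_, Fin.ext ?_⟩
    · exact min_le_min_right _ (hmono (Fin.castSucc_le_castSucc_iff.2 hab))
    · simp [h0]
    · simp [(hfiber j hj).2.2]
  · refine Finset.mem_filter.2 ⟨snoc_castLE_mem_monotonePaths hp hj, ?_⟩
    rw [Fin.snoc_castSucc]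
    exact Fin.ext (by simp [(mem_monotonePaths.1 hj).2.2])
  · funext i
    cases i using Fin.lastCases with
    | last => exact (Fin.snoc_last _ _).trans (hfiber j hj).2.1.symm
    | cast r => exact Fin.ext (by simp [Fin.snoc_castSucc, hle j hj r])
  · funext r
    exact Fin.ext (by simp [Fin.snoc_castSucc, Nat.lt_succ_iff.1 (j r).isLt])
  · rw [Fin.prod_univ_castSucc, Fin.succ_last, (hfiber j hj).2.1, (hfiber j hj).2.2]
    simp only [Fin.succ_castSucc, fun r => min_eq_left (hle j hj r), Fin.val_last,
      Fin.val_castSucc]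

lemma integrableOn_simplex_prod_floor (u : ℕ → ℕ → ℝ) (m : ℕ) (b : ℝ) :
    IntegrableOn (fun t : Fin m → ℝ => ∏ j : Fin m, u ⌊t j⌋₊ j) (simplex m 0 b) := by
  obtain ⟨C, hC⟩ :=
    ((Finset.range (⌊b⌋₊ + 1) ×ˢ Finset.range m).image fun rk => |u rk.1 rk.2|).exists_le
  have hfin : volume (simplex m 0 b) < ⊤ :=
    (measure_mono fun t ht => Set.mem_univ_pi.2 ht.1).trans_lt
      (isCompact_univ_pi fun _ => isCompact_Icc).measure_lt_top
  refine IntegrableOn.of_bound hfin (Measurable.aestronglyMeasurable (by fun_prop)) (C ^ m)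
    ((ae_restrict_iff' (measurableSet_simplex m 0 b)).2 (.of_forall fun t ht => ?_))
  rw [Real.norm_eq_abs, Finset.abs_prod]
  refine (Finset.prod_le_prod (fun _ _ => abs_nonneg _) fun j _ => hC _ (Finset.mem_image.2
    ⟨(⌊t j⌋₊, j), Finset.mem_product.2 ⟨?_, Finset.mem_range.2 j.isLt⟩, rfl⟩)).trans_eq (by simp)
  exact Finset.mem_range.2 (Nat.lt_succ_of_le (Nat.floor_le_floor (ht.1 j).2))

/-- The coefficient of `e_{i_{a+1}} ⊗ ⋯ ⊗ e_{i_b}` in `exp_⊗(v)`, where `u k = v^{i_{k+1}}`. -/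
noncomputable def tensorExpCoeff (u : ℕ → ℝ) (a b : ℕ) : ℝ :=
  (∏ k ∈ Finset.Ico a b, u k) / (b - a).factorial

theorem setIntegral_simplex_prod_floor (u : ℕ → ℕ → ℝ) (T m : ℕ) :
    ∫ t in simplex m 0 T, ∏ j : Fin m, u ⌊t j⌋₊ j =
      monotonePathSum (fun r => tensorExpCoeff (u r)) T m := by
  induction T generalizing m with
  | zero =>
    rw [monotonePathSum_zero, Nat.cast_zero,
      setIntegral_simplex_prod_of_eqOn_Ico le_rfl (fun (i : Fin m) x => u ⌊x⌋₊ i) (fun _ => 0)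
        (fun i x hx => absurd hx (by simp))]
    rcases m with _ | m <;> simp
  | succ T ih =>
    rw [Nat.cast_succ, setIntegral_simplex_prod_eq_sum T.cast_nonneg (by linarith)
      (fun j x => u ⌊x⌋₊ j) (integrableOn_simplex_prod_floor u m _), monotonePathSum_succ]
    refine Finset.sum_congr rfl fun p _ => ?_
    rw [ih p, setIntegral_simplex_prod_of_eqOn_Ico (by linarith)
      (fun i x => u ⌊x⌋₊ (p + i)) (fun i => u T (p + i))
      (fun i x hx => by rw [Nat.floor_eq_on_Ico T x hx])]
    rw [tensorExpCoeff, Finset.prod_Ico_eq_prod_range, ← Fin.prod_univ_eq_prod_range,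
      add_sub_cancel_left, one_pow, one_div, inv_mul_eq_div]

open scoped Classical in
/-- **Signature of a piecewise-constant derivative (discrete time series) as a
tensor product of tensor exponentials**: if `f : [0,T] → ℝ^N` equals `v_r` on
`[r−1, r)` for `r = 1,…,T`, then for any multi-index `I = (i_1,…,i_m)`,
`S^I_{[0,T]}(f) = Σ_{0 = j_0 ≤ j_1 ≤ ⋯ ≤ j_T = m}
   ∏_{r=1}^T (v_r^{i_{j_{r-1}+1}} ⋯ v_r^{i_{j_r}} / (j_r − j_{r-1})!)`,
i.e. `S(γ̂) = exp_⊗(v_1) ⊗ ⋯ ⊗ exp_⊗(v_T)`. -/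
theorem signature_piecewise_constant (N T : ℕ) (v : ℕ → Fin N → ℝ)
    (f : ℝ → Fin N → ℝ)
    (hf : ∀ r ∈ Finset.Icc 1 T, ∀ t ∈ Set.Ico ((r : ℝ) - 1) (r : ℝ), f t = v r)
    (m : ℕ) (I : Fin m → Fin N) :
    (∫ t in simplex m 0 (T : ℝ), ∏ j, f (t j) (I j)) =
      ∑ j ∈ Finset.univ.filter (fun j : Fin (T + 1) → Fin (m + 1) =>
          (∀ p q, p ≤ q → j p ≤ j q) ∧ j 0 = 0 ∧ j (Fin.last T) = Fin.last m),
        ∏ r : Fin T,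
          (∏ p ∈ (Finset.Ico ((j r.castSucc : ℕ)) ((j r.succ : ℕ))).attach,
              v ((r : ℕ) + 1)
                (I ⟨p.1, by
                  have h1 := Finset.mem_Ico.mp p.2
                  have h2 := (j r.succ).isLt
                  omega⟩)) /
            (Nat.factorial ((j r.succ : ℕ) - (j r.castSucc : ℕ)) : ℝ) := by
  let u : ℕ → ℕ → ℝ := fun r k => if hk : k < m then v (r + 1) (I ⟨k, hk⟩) else 0
  have hfloor : ∀ x ∈ Ico (0 : ℝ) T, f x = v (⌊x⌋₊ + 1) := fun x hx =>
    hf _ (Finset.mem_Icc.2 ⟨le_add_self, (Nat.floor_lt hx.1).2 hx.2⟩) x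
      ⟨by push_cast; simpa using Nat.floor_le hx.1, by push_cast; exact Nat.lt_floor_add_one x⟩
  calc ∫ t in simplex m 0 T, ∏ j, f (t j) (I j)
      = ∫ t in simplex m 0 T, ∏ j : Fin m, u ⌊t j⌋₊ j :=
        integral_congr_ae ((ae_restrict_simplex_mem_Ico m 0 T).mono fun t ht =>
          Finset.prod_congr rfl fun j _ => by simp [u, hfloor _ (ht j)])
    _ = monotonePathSum (fun r => tensorExpCoeff (u r)) T m :=
        setIntegral_simplex_prod_floor u T m
    _ = _ := Finset.sum_congr rfl fun j _ => Finset.prod_congr rfl fun r _ => by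
        dsimp only [tensorExpCoeff]
        rw [← Finset.prod_attach]
        congr 1
        exact Finset.prod_congr rfl fun k _ => dif_pos _
end
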